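/- Let G be a finite p-group of order p^n with n ≥ 2 having dense CD-subgroups, and let H ≤ G be a subgroup of order p with H ≠ Z(G). Then m_G(H) = p^n. -/

import Mathlib

open Pointwise

/-- Chermak–Delgado measure of a subgroup. -/
noncomputable def mCD (G : Type*) [Group G] (H : Subgroup G) : ℕ :=
  Nat.card H * Nat.card (Subgroup.centralizer (H : Set G))

/-- Maximal Chermak–Delgado measure. -/
noncomputable def mStar (G : Type*) [Group G] : ℕ :=
  sSup (Set.range (mCD G))

/-- Chermak–Delgado lattice (as a set of subgroups). -/
def CD (G : Type*) [Group G] : Set (Subgroup G) :=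
  {H | mCD G H = mStar G}

/-- A group has dense CD-subgroups if for all subgroups H < K with H not
maximal in K, there exists X in CD(G) with H < X < K. -/
def DenseCD (G : Type*) [Group G] : Prop :=
  ∀ H K : Subgroup G, H < K → (∃ L : Subgroup G, H < L ∧ L < K) →
    ∃ X ∈ CD G, H < X ∧ X < K

/-!
Every member of `CD(G)` contains `Z = Z(G)`, since adjoining `Z` to a subgroup does not change
its centralizer. If `H` had order `p` and lay in `Z`, density between `1` and `Z` would produce a
member of `CD(G)` properly inside `Z`; so `H` is not central and `H < HZ < C_G(H) < G`. Density
then forces the smallest member of `CD(G)` above `H` to be `HZ`, whence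
`|Z| |G| = m(Z) ≤ m(HZ) ≤ |Z| m(H)`, i.e. `|G| ≤ m(H)`. Conversely `m(H) = p |C_G(H)| ≤ |G|`
because `C_G(H)` is a proper subgroup of a `p`-group.
-/

open Subgroup

theorem IsPGroup.mul_card_le_card_of_ne_top {G : Type*} [Group G] [Finite G] {p : ℕ}
    [Fact p.Prime] (hG : IsPGroup p G) {K : Subgroup G} (hK : K ≠ ⊤) :
    p * Nat.card K ≤ Nat.card G := by
  obtain ⟨k, hk⟩ := hG.index K
  have hk0 : k ≠ 0 := by
    rintro rfl
    exact hK (index_eq_one.mp (by rwa [pow_zero] at hk))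
  calc p * Nat.card K ≤ K.index * Nat.card K :=
        Nat.mul_le_mul_right _ (hk ▸ Nat.le_self_pow hk0 p)
    _ = Nat.card G := by rw [mul_comm, card_mul_index]

section ChermakDelgado

variable {G : Type*} [Group G]

theorem centralizer_sup_center (H : Subgroup G) :
    centralizer ((H ⊔ center G : Subgroup G) : Set G) = centralizer (H : Set G) := by
  refine le_antisymm (centralizer_le (SetLike.coe_subset_coe.mpr le_sup_left)) ?_
  exact le_centralizer_iff.mpr
    (sup_le (le_centralizer_iff.mpr le_rfl) (center_le_centralizer _))

theorem mCD_center : mCD G (center G) = Nat.card (center G) * Nat.card G := by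
  rw [mCD, centralizer_center, card_top]

theorem mCD_sup_center_le (H : Subgroup G) :
    mCD G (H ⊔ center G) ≤ Nat.card (center G) * mCD G H := by
  have hcard : Nat.card (H ⊔ center G : Subgroup G) ≤ Nat.card H * Nat.card (center G) := by
    rw [← SetLike.coe_sort_coe, mul_normal H (center G)]
    exact Set.natCard_mul_le
  rw [mCD, mCD, centralizer_sup_center, ← mul_assoc, mul_comm (Nat.card (center G))]
  exact Nat.mul_le_mul_right _ hcard

variable [Finite G]

theorem mCD_le_mStar (K : Subgroup G) : mCD G K ≤ mStar G :=
  le_csSup (Set.finite_range _).bddAbove ⟨K, rfl⟩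

theorem center_le_of_mem_CD {X : Subgroup G} (hX : X ∈ CD G) : center G ≤ X := by
  have hm : mCD G (X ⊔ center G) ≤ mCD G X := hX ▸ mCD_le_mStar _
  rw [mCD, mCD, centralizer_sup_center] at hm
  have hcard := Nat.le_of_mul_le_mul_right hm Nat.card_pos
  exact le_sup_right.trans (eq_of_le_of_card_ge le_sup_left hcard).ge

theorem card_le_mCD_of_sup_center_mem_CD {H : Subgroup G} (hH : H ⊔ center G ∈ CD G) :
    Nat.card G ≤ mCD G H := by
  have h : Nat.card (center G) * Nat.card G ≤ Nat.card (center G) * mCD G H :=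
    calc Nat.card (center G) * Nat.card G = mCD G (center G) := mCD_center.symm
      _ ≤ mCD G (H ⊔ center G) := hH ▸ mCD_le_mStar _
      _ ≤ Nat.card (center G) * mCD G H := mCD_sup_center_le H
  exact Nat.le_of_mul_le_mul_left h Nat.card_pos

theorem DenseCD.eq_bot_or_eq_center_of_le_center (hd : DenseCD G) {H : Subgroup G}
    (hH : H ≤ center G) : H = ⊥ ∨ H = center G := by
  by_contra! h
  have hbot : ⊥ < H := bot_lt_iff_ne_bot.mpr h.1
  have hZ : H < center G := hH.lt_of_ne h.2
  obtain ⟨X, hX, -, hXZ⟩ := hd ⊥ _ (hbot.trans hZ) ⟨H, hbot, hZ⟩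
  exact hXZ.not_ge (center_le_of_mem_CD hX)

theorem DenseCD.sup_center_mem_CD (hd : DenseCD G) {H : Subgroup G}
    (hlt : H < H ⊔ center G) (hlt_top : H ⊔ center G < ⊤) : H ⊔ center G ∈ CD G := by
  obtain ⟨X₀, hX₀, hHX₀, -⟩ := hd H ⊤ (hlt.trans hlt_top) ⟨_, hlt, hlt_top⟩
  obtain ⟨X, ⟨hX, hHX⟩, hmin⟩ :=
    Set.Finite.exists_minimal (s := {X | X ∈ CD G ∧ H < X}) (Set.toFinite _) ⟨X₀, hX₀, hHX₀⟩
  have hle : H ⊔ center G ≤ X := sup_le hHX.le (center_le_of_mem_CD hX)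
  obtain heq | hlt' := hle.eq_or_lt
  · exact heq ▸ hX
  · obtain ⟨X', hX', hHX', hX'X⟩ := hd H X hHX ⟨_, hlt, hlt'⟩
    exact absurd (hmin ⟨hX', hHX'⟩ hX'X.le) hX'X.not_ge

end ChermakDelgado

theorem stmt11_general (G : Type*) [Group G] [Finite G] (p n : ℕ) (hp : p.Prime)
    (hcard : Nat.card G = p ^ n) (hd : DenseCD G)
    (H : Subgroup G) (hH : Nat.card H = p) (hne : H ≠ Subgroup.center G) :
    mCD G H = p ^ n := by
  have : Fact p.Prime := ⟨hp⟩
  have : IsCyclic H := isCyclic_of_prime_card hH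
  have : Nontrivial G := Finite.one_lt_card_iff_nontrivial.mp
    (hp.one_lt.trans_le (hH ▸ card_le_card_group H))
  have hpG : IsPGroup p G := IsPGroup.of_card hcard
  have hH_not_central : ¬ H ≤ center G := fun hle =>
    (hd.eq_bot_or_eq_center_of_le_center hle).elim
      (fun h => hp.ne_one (by rw [← hH, h, card_bot])) hne
  have hZ_not_le : ¬ center G ≤ H := by
    intro hle
    have := hpG.center_nontrivial
    have hZ : Nat.card (center G) = p :=
      ((Nat.dvd_prime hp).mp (hH ▸ card_dvd_of_le hle)).resolve_left Finite.one_lt_card.ne'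
    exact hne (eq_of_le_of_card_ge hle (hH.trans hZ.symm).le).symm
  have hC : centralizer (H : Set G) ≠ ⊤ := fun h =>
    hH_not_central (centralizer_eq_top_iff_subset.mp h)
  have hCD : H ⊔ center G ∈ CD G := hd.sup_center_mem_CD (left_lt_sup.mpr hZ_not_le)
    ((sup_le (le_centralizer H) (center_le_centralizer _)).trans_lt hC.lt_top)
  refine le_antisymm ?_ (hcard ▸ card_le_mCD_of_sup_center_mem_CD hCD)
  rw [mCD, hH, ← hcard]
  exact hpG.mul_card_le_card_of_ne_top hC

theorem stmt11 (G : Type*) [Group G] [Finite G] (p n : ℕ) (hp : p.Prime) (hn : 2 ≤ n)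
    (hcard : Nat.card G = p ^ n) (hd : DenseCD G)
    (H : Subgroup G) (hH : Nat.card H = p) (hne : H ≠ Subgroup.center G) :
    mCD G H = p ^ n :=
  stmt11_general G p n hp hcard hd H hH hne
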